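/- arXiv:2407.15439 — 2 statements merged into one kernel-verified Lean document; each statement's English description precedes it below -/
import Mathlib

section
/- Let K ≥ 1 and let (f_a)_{a=1}^K and (g_a)_{a=1}^K be families of strictly positive real numbers, with F = ∑_{a=1}^K f_a and G = ∑_{a=1}^K g_a. Then ∑_{a=1}^K | f_a/F − g_a/G | ≤ (2/F) · ∑_{a=1}^K | f_a − g_a |. -/
/-- Stability of normalization: the L1 distance between the two normalized
vectors is controlled by the L1 distance between the unnormalized values. -/
theorem normalized_l1_stability
    (K : ℕ) (hK : 1 ≤ K) (f g : Fin K → ℝ)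
    (hf : ∀ a, 0 < f a) (hg : ∀ a, 0 < g a) :
    ∑ a, |f a / (∑ a', f a') - g a / (∑ a', g a')| ≤
      (2 / (∑ a', f a')) * ∑ a, |f a - g a| := by
  have hne : (Finset.univ : Finset (Fin K)).Nonempty := by
    simpa [Finset.univ_nonempty_iff] using Fin.pos_iff_nonempty.mp hK
  set F := ∑ a', f a' with hFdef
  set G := ∑ a', g a' with hGdef
  have hF : 0 < F := Finset.sum_pos (fun a _ => hf a) hne
  have hG : 0 < G := Finset.sum_pos (fun a _ => hg a) hne
  have hsub : |F - G| ≤ ∑ a, |f a - g a| := by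
    calc |F - G| = |∑ a, (f a - g a)| := by rw [hFdef, hGdef, Finset.sum_sub_distrib]
    _ ≤ ∑ a, |f a - g a| := Finset.abs_sum_le_sum_abs _ _
  have key : ∀ a : Fin K, |f a / F - g a / G| ≤
      |f a - g a| / F + (g a / G) * (|F - G| / F) := by
    intro a
    have heq : f a / F - g a / G = (f a - g a) / F + (g a / G) * ((G - F) / F) := by
      field_simp; ring
    rw [heq]
    refine (abs_add_le _ _).trans ?_
    have h1 : |(f a - g a) / F| = |f a - g a| / F := by
      rw [abs_div, abs_of_pos hF]
    have h2 : |(g a / G) * ((G - F) / F)| = (g a / G) * (|F - G| / F) := by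
      rw [abs_mul, abs_div, abs_div, abs_of_pos hF, abs_of_pos hG,
        abs_of_pos (hg a), abs_sub_comm]
    rw [h1, h2]
  calc ∑ a, |f a / F - g a / G|
      ≤ ∑ a, (|f a - g a| / F + (g a / G) * (|F - G| / F)) :=
        Finset.sum_le_sum fun a _ => key a
    _ = (∑ a, |f a - g a|) / F + (G / G) * (|F - G| / F) := by
        rw [Finset.sum_add_distrib, ← Finset.sum_div, ← Finset.sum_mul,
          ← Finset.sum_div]
    _ = (∑ a, |f a - g a|) / F + |F - G| / F := by
        rw [div_self hG.ne', one_mul]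
    _ ≤ (∑ a, |f a - g a|) / F + (∑ a, |f a - g a|) / F := by
        gcongr
    _ = (2 / F) * ∑ a, |f a - g a| := by ring
end

section
/- Let K ≥ 1, L > 0, λ > 0 and M > 0 be real numbers. Let f : ℝ → ℝ be M-Lipschitz and satisfy f(x) ≥ λ for all x ∈ [0,1]. Let μ, ν ∈ [0,1]^K, and define policies p_a = L·f(ν_a)/∑_{a'=1}^K f(ν_{a'}) and p*_a = L·f(μ_a)/∑_{a'=1}^K f(μ_{a'}). Then ∑_{a=1}^K |p_a − p*_a| ≤ (2M/λ) · ∑_{a=1}^K p_a · |ν_a − μ_a|. -/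
/-- Per-round fairness deviation bound for merit-proportional policies. -/
theorem fairness_deviation_bound
    (K : ℕ) (hK : 1 ≤ K) (L lam M : ℝ) (hL : 0 < L) (hlam : 0 < lam) (hM : 0 < M)
    (f : ℝ → ℝ) (hLip : LipschitzWith (Real.toNNReal M) f)
    (hmin : ∀ x ∈ Set.Icc (0 : ℝ) 1, lam ≤ f x)
    (μ ν : Fin K → ℝ)
    (hμ : ∀ a, μ a ∈ Set.Icc (0 : ℝ) 1) (hν : ∀ a, ν a ∈ Set.Icc (0 : ℝ) 1)
    (p pstar : Fin K → ℝ)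
    (hp : ∀ a, p a = L * f (ν a) / ∑ a', f (ν a'))
    (hpstar : ∀ a, pstar a = L * f (μ a) / ∑ a', f (μ a')) :
    ∑ a, |p a - pstar a| ≤ (2 * M / lam) * ∑ a, p a * |ν a - μ a| := by
  haveI : NeZero K := ⟨by omega⟩
  set S := ∑ a', f (ν a') with hS
  set T := ∑ a', f (μ a') with hT
  have hfν : ∀ a, lam ≤ f (ν a) := fun a => hmin _ (hν a)
  have hfμ : ∀ a, lam ≤ f (μ a) := fun a => hmin _ (hμ a)
  have hSpos : 0 < S :=
    Finset.sum_pos (fun a _ => lt_of_lt_of_le hlam (hfν a)) Finset.univ_nonempty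
  have hTpos : 0 < T :=
    Finset.sum_pos (fun a _ => lt_of_lt_of_le hlam (hfμ a)) Finset.univ_nonempty
  have hlipf : ∀ x y : ℝ, |f x - f y| ≤ M * |x - y| := by
    intro x y
    have h := hLip.dist_le_mul x y
    rwa [Real.dist_eq, Real.dist_eq, Real.coe_toNNReal M hM.le] at h
  set D := ∑ a, |ν a - μ a| with hD
  have hDnn : 0 ≤ D := Finset.sum_nonneg fun a _ => abs_nonneg _
  -- bound sum of |f ν - f μ|
  have hsum1 : ∑ a, |f (ν a) - f (μ a)| ≤ M * D := by
    rw [hD, Finset.mul_sum]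
    exact Finset.sum_le_sum fun a _ => hlipf _ _
  have hTS : |T - S| ≤ M * D := by
    have : T - S = ∑ a, (f (μ a) - f (ν a)) := by
      rw [hS, hT, Finset.sum_sub_distrib]
    rw [this]
    calc |∑ a, (f (μ a) - f (ν a))| ≤ ∑ a, |f (μ a) - f (ν a)| :=
          Finset.abs_sum_le_sum_abs _ _
      _ ≤ M * D := by
          rw [hD, Finset.mul_sum]
          refine Finset.sum_le_sum fun a _ => ?_
          rw [abs_sub_comm]
          exact hlipf _ _
  -- pointwise decomposition
  have key : ∑ a, |p a - pstar a| ≤ (2 * L * M / S) * D := by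
    have h1 : ∀ a, |p a - pstar a| ≤
        L * |f (ν a) - f (μ a)| / S + f (μ a) * (L * |T - S| / (S * T)) := by
      intro a
      rw [hp a, hpstar a]
      have hrw : L * f (ν a) / S - L * f (μ a) / T =
          L * (f (ν a) - f (μ a)) / S + L * f (μ a) * (T - S) / (S * T) := by
        field_simp
        ring
      rw [hrw]
      refine (abs_add_le _ _).trans (le_of_eq ?_)
      rw [abs_div, abs_mul, abs_of_pos hL, abs_of_pos hSpos,
        abs_div, abs_mul, abs_mul, abs_of_pos hL,
        abs_of_pos (lt_of_lt_of_le hlam (hfμ a)), abs_of_pos (mul_pos hSpos hTpos)]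
      ring
    calc ∑ a, |p a - pstar a|
        ≤ ∑ a, (L * |f (ν a) - f (μ a)| / S + f (μ a) * (L * |T - S| / (S * T))) :=
          Finset.sum_le_sum fun a _ => h1 a
      _ = (L / S) * ∑ a, |f (ν a) - f (μ a)| + (L / S) * |T - S| := by
          have e1 : ∑ a, L * |f (ν a) - f (μ a)| / S
              = (L / S) * ∑ a, |f (ν a) - f (μ a)| := by
            rw [Finset.mul_sum]
            exact Finset.sum_congr rfl fun a _ => by ring
          have e2 : ∑ a, f (μ a) * (L * |T - S| / (S * T)) = (L / S) * |T - S| := by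
            rw [← Finset.sum_mul, ← hT]
            field_simp
          rw [Finset.sum_add_distrib, e1, e2]
      _ ≤ (L / S) * (M * D) + (L / S) * (M * D) := by
          have hLS : 0 ≤ L / S := le_of_lt (div_pos hL hSpos)
          gcongr
      _ = (2 * L * M / S) * D := by ring
  refine key.trans ?_
  -- compare with RHS
  have hrhs : (2 * L * M / S) * D ≤ (2 * M / lam) * ∑ a, p a * |ν a - μ a| := by
    have hlow : (L * lam / S) * D ≤ ∑ a, p a * |ν a - μ a| := by
      rw [hD, Finset.mul_sum]
      refine Finset.sum_le_sum fun a _ => ?_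
      rw [hp a]
      have h0 : 0 ≤ |ν a - μ a| := abs_nonneg _
      gcongr
      exact hfν a
    calc (2 * L * M / S) * D = (2 * M / lam) * ((L * lam / S) * D) := by
          field_simp
      _ ≤ (2 * M / lam) * ∑ a, p a * |ν a - μ a| := by
          gcongr
  exact hrhs
end
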